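/- arXiv:cs/0005001 — 5 statements merged into one kernel-verified Lean document; each statement's English description precedes it below -/
import Mathlib

section
/- Let m_r ≥ 1, m_n ≥ 1, let the noise-concentrated area be the union of B pairwise disjoint m_n × m_n noise-concentrated blocks, so its size is S_c = B·m_n², and fix any offset (a,b) ∈ ℤ². Then the number of region indices attained by cells of the noise-concentrated area is at most B·(⌈m_n/m_r⌉ + 1)²; consequently, the total size S_r = m_r² · (number of noise-contaminated regions) of the noise-contaminated regions satisfies S_r ≤ S_c · (m_r²/m_n²) · (⌈m_n/m_r⌉ + 1)². -/
/-- The region index of a cell `(x, y)` for region side length `m` and offset `(a, b)`: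
`(⌊(x−a)/m⌋, ⌊(y−b)/m⌋)`. -/
def regionIdx (m a b : ℤ) (p : ℤ × ℤ) : ℤ × ℤ :=
  ((p.1 - a).fdiv m, (p.2 - b).fdiv m)

/-- The `mn × mn` noise-concentrated block at position `(u, v)`. -/
noncomputable def noiseBlock (mn u v : ℤ) : Finset (ℤ × ℤ) :=
  Finset.Ico u (u + mn) ×ˢ Finset.Ico v (v + mn)

/-!
With `K = ⌈m_n / m_r⌉` we have `m_n ≤ K m_r`, so the `m_n` consecutive integers of a side of a
block meet at most `K + 1` consecutive blocks of `m_r` integers. A block therefore meets at most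
`(K + 1)²` regions, and the `B` blocks together at most `B (K + 1)²`. The bound on `S_r` is this
count multiplied by `m_r²`, with `B = S_c / m_n²`.
-/

open Finset

namespace Int

theorem le_ceil_div_mul {k : Type*} [Field k] [LinearOrder k] [IsStrictOrderedRing k]
    [FloorRing k] {m : ℤ} (hm : 0 < m) (n : ℤ) : n ≤ ⌈(n : k) / m⌉ * m := by
  have hmk : (0 : k) < m := by exact_mod_cast hm
  exact_mod_cast (div_le_iff₀ hmk).mp (Int.le_ceil ((n : k) / m))

theorem toNat_sq_le (x : ℤ) : (x.toNat : ℤ) ^ 2 ≤ x ^ 2 := by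
  rw [Int.toNat_eq_max]
  rcases le_total x 0 with h | h <;> simp [h, sq_nonneg]

variable {m n K : ℤ}

theorem ediv_mem_Icc_of_mem_Ico (hm : 0 < m) (hK : n ≤ K * m) {u t : ℤ}
    (ht : t ∈ Ico u (u + n)) : t / m ∈ Icc (u / m) (u / m + K) := by
  obtain ⟨hut, htu⟩ := mem_Ico.mp ht
  have hlt : t < (u / m + K + 1) * m := by
    linarith [Int.lt_ediv_add_one_mul_self u hm]
  refine mem_Icc.mpr ⟨Int.ediv_le_ediv hm hut, ?_⟩
  have := Int.ediv_lt_of_lt_mul hm hlt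
  omega

theorem card_image_fdiv_sub_Ico_le (hm : 0 < m) (hK : n ≤ K * m) (a u : ℤ) :
    #((Ico u (u + n)).image fun t => (t - a).fdiv m) ≤ (K + 1).toNat := by
  have hsub : (Ico u (u + n)).image (fun t => (t - a).fdiv m) ⊆
      Icc ((u - a) / m) ((u - a) / m + K) := by
    intro q hq
    obtain ⟨t, ht, rfl⟩ := mem_image.mp hq
    rw [Int.fdiv_eq_ediv_of_nonneg _ hm.le]
    refine ediv_mem_Icc_of_mem_Ico hm hK (mem_Ico.mpr ?_)
    have := mem_Ico.mp ht
    omega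
  calc _ ≤ #(Icc ((u - a) / m) ((u - a) / m + K)) := card_le_card hsub
    _ = (K + 1).toNat := by rw [Int.card_Icc]; congr 1; ring

end Int

theorem noiseBlock_image_regionIdx (m n a b u v : ℤ) :
    (noiseBlock n u v).image (regionIdx m a b) =
      (Ico u (u + n)).image (fun x => (x - a).fdiv m) ×ˢ
        (Ico v (v + n)).image (fun y => (y - b).fdiv m) :=
  prodMap_image_product (fun x => (x - a).fdiv m) (fun y => (y - b).fdiv m) _ _

theorem card_image_regionIdx_noiseBlock_le {m n K : ℤ} (hm : 0 < m) (hK : n ≤ K * m)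
    (a b u v : ℤ) : #((noiseBlock n u v).image (regionIdx m a b)) ≤ (K + 1).toNat ^ 2 := by
  rw [noiseBlock_image_regionIdx, card_product, sq]
  exact Nat.mul_le_mul (Int.card_image_fdiv_sub_Ico_le hm hK a u)
    (Int.card_image_fdiv_sub_Ico_le hm hK b v)

theorem contaminated_regions_bound_general (mr mn : ℤ) (hmr : 1 ≤ mr) (hmn : 1 ≤ mn)
    (B : ℕ) (pos : Fin B → ℤ × ℤ)
    (area : Finset (ℤ × ℤ))
    (harea : area = Finset.univ.biUnion (fun i : Fin B => noiseBlock mn (pos i).1 (pos i).2))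
    (Sc : ℤ) (hSc : Sc = (B : ℤ) * mn ^ 2)
    (a b : ℤ)
    (Sr : ℤ) (hSr : Sr = mr ^ 2 * ((area.image (regionIdx mr a b)).card : ℤ)) :
    ((area.image (regionIdx mr a b)).card : ℤ) ≤ (B : ℤ) * (⌈(mn : ℚ) / (mr : ℚ)⌉ + 1) ^ 2 ∧
    (Sr : ℚ) ≤ (Sc : ℚ) * ((mr : ℚ) ^ 2 / (mn : ℚ) ^ 2) * ((⌈(mn : ℚ) / (mr : ℚ)⌉ : ℚ) + 1) ^ 2 := by
  set K : ℤ := ⌈(mn : ℚ) / (mr : ℚ)⌉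
  have hmr0 : 0 < mr := by omega
  have hK : mn ≤ K * mr := Int.le_ceil_div_mul hmr0 mn
  have hcount : (#(area.image (regionIdx mr a b)) : ℤ) ≤ B * (K + 1) ^ 2 := by
    have hnat : #(area.image (regionIdx mr a b)) ≤ B * (K + 1).toNat ^ 2 := by
      rw [harea, biUnion_image]
      simpa using card_biUnion_le_card_mul univ _ _ fun i _ =>
        card_image_regionIdx_noiseBlock_le hmr0 hK a b (pos i).1 (pos i).2
    calc (#(area.image (regionIdx mr a b)) : ℤ) ≤ B * ((K + 1).toNat : ℤ) ^ 2 := by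
          exact_mod_cast hnat
      _ ≤ B * (K + 1) ^ 2 := mul_le_mul_of_nonneg_left (Int.toNat_sq_le _) (by positivity)
  refine ⟨hcount, ?_⟩
  have hmnQ : (mn : ℚ) ≠ 0 := by exact_mod_cast (by omega : mn ≠ 0)
  have hScQ : (Sc : ℚ) * ((mr : ℚ) ^ 2 / (mn : ℚ) ^ 2) = (mr : ℚ) ^ 2 * B := by
    rw [hSc]; push_cast; field_simp
  rw [hScQ, hSr, mul_assoc]
  push_cast
  gcongr
  exact_mod_cast hcount

/-- Theorem 1, item 1: if the noise-concentrated area is the union of `B` pairwise disjoint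
`m_n × m_n` blocks (so `S_c = B·m_n²`), then for any offset the number of noise-contaminated
regions is at most `B·(⌈m_n/m_r⌉ + 1)²`, hence the total size
`S_r = m_r² · (number of contaminated regions)` satisfies
`S_r ≤ S_c · (m_r²/m_n²) · (⌈m_n/m_r⌉ + 1)²`. -/
theorem contaminated_regions_bound (mr mn : ℤ) (hmr : 1 ≤ mr) (hmn : 1 ≤ mn)
    (B : ℕ) (pos : Fin B → ℤ × ℤ)
    (hdisj : ∀ i j : Fin B, i ≠ j →
      Disjoint (noiseBlock mn (pos i).1 (pos i).2) (noiseBlock mn (pos j).1 (pos j).2))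
    (area : Finset (ℤ × ℤ))
    (harea : area = Finset.univ.biUnion (fun i : Fin B => noiseBlock mn (pos i).1 (pos i).2))
    (Sc : ℤ) (hSc : Sc = (B : ℤ) * mn ^ 2)
    (a b : ℤ)
    (Sr : ℤ) (hSr : Sr = mr ^ 2 * ((area.image (regionIdx mr a b)).card : ℤ)) :
    ((area.image (regionIdx mr a b)).card : ℤ) ≤ (B : ℤ) * (⌈(mn : ℚ) / (mr : ℚ)⌉ + 1) ^ 2 ∧
    (Sr : ℚ) ≤ (Sc : ℚ) * ((mr : ℚ) ^ 2 / (mn : ℚ) ^ 2) * ((⌈(mn : ℚ) / (mr : ℚ)⌉ : ℚ) + 1) ^ 2 :=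
  contaminated_regions_bound_general mr mn hmr hmn B pos area harea Sc hSc a b Sr hSr
end

section
/- For all integers m_r ≥ 1 and m_n ≥ 1 and every block position (u,v) ∈ ℤ², the sum over all m_r² shifts (a,b) ∈ {0,…,m_r−1}² of the number of distinct region indices attained by the m_n × m_n noise-concentrated block at (u,v) under offset (a,b) equals (m_n + m_r − 1)². -/
/-! For a fixed offset `a`, the cells `u, …, u + n - 1` of one row meet the consecutive regions
`(u - a) / m, …, (u + n - 1 - a) / m`, and a block meets the product of the regions met by its
two projections. As `a` runs over `0, …, m - 1`, the quotient `(t - a) / m` drops by one exactly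
once `a` passes `t % m`, so `∑ a, (t - a) / m = t - m + 1`; hence each coordinate contributes
`n + m - 1` in total, and the double sum over offsets factorises into the square. -/

open Finset

namespace Int

variable {m : ℤ}

theorem image_ediv_Icc (hm : 0 < m) {p q : ℤ} (hpq : p ≤ q) :
    (Icc p q).image (· / m) = Icc (p / m) (q / m) := by
  ext k
  simp only [mem_image, mem_Icc]
  constructor
  · rintro ⟨x, ⟨hpx, hxq⟩, rfl⟩
    exact ⟨Int.ediv_le_ediv hm hpx, Int.ediv_le_ediv hm hxq⟩
  · rintro ⟨hpk, hkq⟩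
    have hkm : k * m ≤ q := (Int.le_ediv_iff_mul_le hm).1 hkq
    have hp : p < (k + 1) * m :=
      (lt_ediv_add_one_mul_self p hm).trans_le (by gcongr)
    refine ⟨max p (k * m), ⟨le_max_left _ _, max_le hpq hkm⟩, ?_⟩
    rw [ediv_eq_iff_of_pos hm]
    exact ⟨le_max_right _ _, max_lt (by linarith) (by linarith)⟩

theorem sub_ediv_eq_ediv_sub_ite {t a : ℤ} (ha₀ : 0 ≤ a) (ham : a < m) :
    (t - a) / m = t / m - if t % m < a then 1 else 0 := by
  have hm : 0 < m := ha₀.trans_lt ham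
  have ht := mul_ediv_add_emod t m
  have := emod_nonneg t hm.ne'
  have := emod_lt_of_pos t hm
  rw [ediv_eq_iff_of_pos hm]
  split_ifs <;> constructor <;> linarith

theorem sum_Ico_sub_ediv (hm : 0 < m) (t : ℤ) :
    ∑ a ∈ Ico 0 m, (t - a) / m = t - m + 1 := by
  have hfilter : {a ∈ Ico 0 m | t % m < a} = Ioo (t % m) m := by
    ext a
    simp only [mem_filter, mem_Ico, mem_Ioo]
    have := emod_nonneg t hm.ne'
    omega
  rw [sum_congr rfl fun a ha => sub_ediv_eq_ediv_sub_ite (mem_Ico.1 ha).1 (mem_Ico.1 ha).2,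
    sum_sub_distrib, sum_const, sum_boole, hfilter, card_Ico, card_Ioo, nsmul_eq_mul]
  have := emod_lt_of_pos t hm
  have := mul_ediv_add_emod t m
  rw [toNat_of_nonneg (by omega), toNat_of_nonneg (by omega)]
  linarith

end Int

section

variable {m n : ℤ}

theorem card_image_fdiv_sub_Ico (hm : 0 < m) (hn : 0 < n) (u a : ℤ) :
    (#((Ico u (u + n)).image fun x => (x - a).fdiv m) : ℤ) =
      (u + n - 1 - a) / m - (u - a) / m + 1 := by
  have hshift : (Ico u (u + n)).image (· - a) = Icc (u - a) (u + n - 1 - a) := by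
    simp_rw [sub_eq_add_neg, image_add_right_Ico, ← Icc_sub_one_right_eq_Ico]
    ring_nf
  have hfdiv : (fun x => (x - a).fdiv m) = (· / m) ∘ (· - a) := by
    funext x
    exact Int.fdiv_eq_ediv_of_nonneg _ hm.le
  have hle : (u - a) / m ≤ (u + n - 1 - a) / m := Int.ediv_le_ediv hm (by omega)
  rw [hfdiv, ← image_image, hshift, Int.image_ediv_Icc hm (by omega), Int.card_Icc,
    Int.toNat_of_nonneg (by omega)]
  ring

theorem sum_card_image_fdiv_sub_Ico (hm : 0 < m) (hn : 0 < n) (u : ℤ) :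
    ∑ a ∈ Ico 0 m, (#((Ico u (u + n)).image fun x => (x - a).fdiv m) : ℤ) = n + m - 1 := by
  simp_rw [card_image_fdiv_sub_Ico hm hn]
  rw [sum_add_distrib, sum_sub_distrib, Int.sum_Ico_sub_ediv hm, Int.sum_Ico_sub_ediv hm,
    sum_const, Int.card_Ico, sub_zero, nsmul_one, Int.toNat_of_nonneg hm.le]
  ring

end

theorem image_noiseBlock_regionIdx (m n u v a b : ℤ) :
    (noiseBlock n u v).image (regionIdx m a b) =
      (Ico u (u + n)).image (fun x => (x - a).fdiv m) ×ˢ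
        (Ico v (v + n)).image (fun y => (y - b).fdiv m) :=
  prodMap_image_product (fun x => (x - a).fdiv m) (fun y => (y - b).fdiv m) _ _

/-- Key counting claim in the proof of Theorem 2: summed over all `m_r²` shifts of the
partition into `m_r × m_r` square regions, an `m_n × m_n` noise-concentrated block
contaminates a total of `(m_n + m_r − 1)²` regions. -/
theorem sum_over_shifts_of_contaminated_regions (mr mn : ℤ) (hmr : 1 ≤ mr) (hmn : 1 ≤ mn)
    (u v : ℤ) :
    (∑ ab ∈ Finset.Ico (0 : ℤ) mr ×ˢ Finset.Ico (0 : ℤ) mr,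
      (((noiseBlock mn u v).image (regionIdx mr ab.1 ab.2)).card : ℤ))
      = (mn + mr - 1) ^ 2 := by
  simp_rw [sum_product, image_noiseBlock_regionIdx, card_product, Nat.cast_mul, ← sum_mul_sum,
    sum_card_image_fdiv_sub_Ico hmr hmn, sq]
end

section
/- Assume m_n ≤ L − m_r and m_n ≤ M − m_r. Let v and v' be votings of the nation such that under v, for every shift (a,b) ∈ {0,…,m_r−1}², candidate A receives strictly more votes than B in every region of the shifted partition. Suppose every cell where v' differs from v lies in the union of B_blk pairwise disjoint m_n × m_n noise-concentrated blocks contained in the nation, and set S_c = B_blk·m_n². If S_c < (m_n/(m_r + m_n − 1))² · (N/2), then there exists a shift (a,b) ∈ {0,…,m_r−1}² such that under the corresponding shifted partition, candidate A wins strictly more than half of the K regions under v', i.e. regional voting with that partition still selects A. -/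
/-- The nation: the set of cells `{0,…,L−1} × {0,…,M−1} ⊆ ℤ²`. -/
noncomputable def nation (L M : ℤ) : Finset (ℤ × ℤ) :=
  Finset.Ico 0 L ×ˢ Finset.Ico 0 M

/-- The region index of a cell `(x, y)` of the `L × M` toroidal nation, under the partition
into `m × m` squares shifted by `(a, b)` (with wrap-around):
`(⌊((x−a) mod L)/m⌋, ⌊((y−b) mod M)/m⌋)`. -/
def regionIdxT (L M m a b : ℤ) (p : ℤ × ℤ) : ℤ × ℤ :=
  (((p.1 - a) % L).fdiv m, ((p.2 - b) % M).fdiv m)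

/-- The number of votes that candidate `c` (`true` = A, `false` = B) receives in the region
with index `r` of the `(a,b)`-shifted partition, under voting `v`. -/
noncomputable def votesIn (L M mr a b : ℤ) (v : ℤ × ℤ → Bool) (r : ℤ × ℤ) (c : Bool) : ℕ :=
  ((nation L M).filter (fun p => regionIdxT L M mr a b p = r ∧ v p = c)).card

/-! Every cell where `v'` differs from `v` lies in the union `D` of the blocks, so under any
shift each region that `D` does not touch is still won by A. A region touched by an interval of
length `m_n` is determined by its first cell, which lies in a window of `m_r + m_n - 1` cells
ending with the interval; hence, summed over the `m_r` shifts of one axis, an interval touches at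
most `m_r + m_n - 1` regions, and over all `m_r²` shifts the blocks touch at most
`B_blk (m_r + m_n - 1)²` regions. The noise bound makes this less than `m_r² K / 2`, so some shift
leaves more than half of the `K` regions untouched. -/

open Finset

def regionCoord (L m a x : ℤ) : ℤ := ((x - a) % L).fdiv m

section regionCoord

variable {L m : ℤ}

lemma regionCoord_eq_ediv (hm : 0 ≤ m) (a x : ℤ) : regionCoord L m a x = (x - a) % L / m :=
  Int.fdiv_eq_ediv_of_nonneg _ hm

lemma regionCoord_mem_Ico (hL : 0 < L) (hm : 0 < m) (hmL : m ∣ L) (a x : ℤ) :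
    regionCoord L m a x ∈ Ico 0 (L / m) := by
  rw [regionCoord_eq_ediv hm.le, mem_Ico, Int.ediv_lt_iff_lt_mul hm, Int.ediv_mul_cancel hmL]
  exact ⟨Int.ediv_nonneg (Int.emod_nonneg _ hL.ne') hm.le, Int.emod_lt_of_pos _ hL⟩

lemma image_Ico_regionCoord (hL : 0 < L) (hm : 0 < m) (hmL : m ∣ L) (a : ℤ) :
    (Ico 0 L).image (regionCoord L m a) = Ico 0 (L / m) := by
  refine Subset.antisymm (fun j hj => ?_) (fun j hj => ?_)
  · obtain ⟨x, -, rfl⟩ := mem_image.1 hj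
    exact regionCoord_mem_Ico hL hm hmL a x
  · have hjm : j * m ∈ Ico 0 L := by
      rw [mem_Ico] at hj ⊢
      rw [Int.lt_ediv_iff_mul_lt hm hmL] at hj
      exact ⟨mul_nonneg hj.1 hm.le, hj.2⟩
    refine mem_image.2 ⟨(a + j * m) % L, mem_Ico.2 ⟨Int.emod_nonneg _ hL.ne',
      Int.emod_lt_of_pos _ hL⟩, ?_⟩
    rw [mem_Ico] at hjm
    rw [regionCoord_eq_ediv hm.le, Int.sub_emod, Int.emod_emod, ← Int.sub_emod,
      add_sub_cancel_left, Int.emod_eq_of_lt hjm.1 hjm.2, Int.mul_ediv_cancel _ hm.ne']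

lemma add_regionCoord_mul_eq_emod (hL : 0 < L) (hm : 0 < m) (hmL : m ∣ L) {a : ℤ}
    (ha : a ∈ Ico 0 m) (x : ℤ) :
    a + regionCoord L m a x * m = (x - (x - a) % L % m) % L := by
  have hj := regionCoord_mem_Ico hL hm hmL a x
  rw [regionCoord_eq_ediv hm.le, mem_Ico] at *
  set y := (x - a) % L
  have hlt : a + y / m * m < L := by
    have := mul_le_mul_of_nonneg_right (show y / m + 1 ≤ L / m by omega) hm.le
    rw [Int.ediv_mul_cancel hmL] at this
    linarith
  have hx : x - y % m = a + y / m * m + L * ((x - a) / L) := by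
    have := Int.emod_add_mul_ediv y m
    have := Int.emod_add_mul_ediv (x - a) L
    linarith
  rw [hx, Int.add_mul_emod_self_left,
    Int.emod_eq_of_lt (add_nonneg ha.1 (mul_nonneg hj.1 hm.le)) hlt]

theorem sum_card_image_regionCoord_le (hL : 0 < L) (hm : 0 < m) (hmL : m ∣ L) (u n : ℤ) :
    ∑ a ∈ Ico 0 m, #((Ico u (u + n)).image (regionCoord L m a)) ≤ (m + n - 1).toNat := by
  rw [← card_sigma, show m + n - 1 = u + n - (u - m + 1) by ring, ← Int.card_Ico]
  refine (card_le_card_of_injOn (fun q => q.1 + q.2 * m) ?_ ?_).trans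
    (card_image_le (f := (· % L)))
  · rintro ⟨a, j⟩ h
    simp only [coe_sigma, Set.mem_sigma_iff, mem_coe, mem_image] at h
    obtain ⟨ha, x, hx, rfl⟩ := h
    refine mem_image.2
      ⟨x - (x - a) % L % m, ?_, (add_regionCoord_mul_eq_emod hL hm hmL ha x).symm⟩
    have := Int.emod_nonneg ((x - a) % L) hm.ne'
    have := Int.emod_lt_of_pos ((x - a) % L) hm
    simp only [mem_Ico] at hx ⊢
    omega
  · have hdiv : ∀ a j, a ∈ Ico 0 m → (a + j * m) / m = j ∧ (a + j * m) % m = a :=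
      fun a j ha => (Int.ediv_emod_unique hm).2 ⟨by ring, mem_Ico.1 ha⟩
    rintro ⟨a, j⟩ h ⟨a', j'⟩ h' heq
    simp only [coe_sigma, Set.mem_sigma_iff, mem_coe] at h h' heq
    obtain ⟨hj, ha⟩ := hdiv a j h.1
    obtain ⟨hj', ha'⟩ := hdiv a' j' h'.1
    obtain rfl : a = a' := by rw [← ha, heq, ha']
    obtain rfl : j = j' := by rw [← hj, heq, hj']
    rfl

end regionCoord

lemma regionIdxT_eq_prodMap (L M m a b : ℤ) :
    regionIdxT L M m a b = Prod.map (regionCoord L m a) (regionCoord M m b) := rfl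

section regionIdxT

variable {L M m : ℤ}

lemma card_image_regionIdxT_nation (hL : 0 < L) (hM : 0 < M) (hm : 0 < m) (hmL : m ∣ L)
    (hmM : m ∣ M) (a b : ℤ) :
    (#((nation L M).image (regionIdxT L M m a b)) : ℤ) = L / m * (M / m) := by
  rw [nation, regionIdxT_eq_prodMap, prodMap_image_product, image_Ico_regionCoord hL hm hmL,
    image_Ico_regionCoord hM hm hmM, card_product, Int.card_Ico, Int.card_Ico, sub_zero,
    sub_zero, Nat.cast_mul, Int.toNat_of_nonneg (Int.ediv_nonneg hL.le hm.le),
    Int.toNat_of_nonneg (Int.ediv_nonneg hM.le hm.le)]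

theorem sum_card_image_noiseBlock_le (hL : 0 < L) (hM : 0 < M) (hm : 0 < m) (hmL : m ∣ L)
    (hmM : m ∣ M) (n u v : ℤ) :
    ∑ s ∈ Ico 0 m ×ˢ Ico 0 m, #((noiseBlock n u v).image (regionIdxT L M m s.1 s.2)) ≤
      (m + n - 1).toNat ^ 2 := by
  simp_rw [noiseBlock, regionIdxT_eq_prodMap, prodMap_image_product, card_product]
  rw [sum_product]
  dsimp only
  rw [← sum_mul_sum, sq]
  exact Nat.mul_le_mul (sum_card_image_regionCoord_le hL hm hmL u n)
    (sum_card_image_regionCoord_le hM hm hmM v n)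

theorem sum_card_image_biUnion_noiseBlock_le (hL : 0 < L) (hM : 0 < M) (hm : 0 < m)
    (hmL : m ∣ L) (hmM : m ∣ M) (n : ℤ) {ι : Type*} (t : Finset ι)
    (pos : ι → ℤ × ℤ) :
    ∑ s ∈ Ico 0 m ×ˢ Ico 0 m,
        #((t.biUnion fun i => noiseBlock n (pos i).1 (pos i).2).image
          (regionIdxT L M m s.1 s.2)) ≤ #t * (m + n - 1).toNat ^ 2 := by
  classical
  calc _ ≤ ∑ s ∈ Ico 0 m ×ˢ Ico 0 m, ∑ i ∈ t,
          #((noiseBlock n (pos i).1 (pos i).2).image (regionIdxT L M m s.1 s.2)) :=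
        sum_le_sum fun s _ => by rw [biUnion_image]; exact card_biUnion_le
    _ = ∑ i ∈ t, ∑ s ∈ Ico 0 m ×ˢ Ico 0 m,
          #((noiseBlock n (pos i).1 (pos i).2).image (regionIdxT L M m s.1 s.2)) := sum_comm
    _ ≤ #t • (m + n - 1).toNat ^ 2 :=
        sum_le_card_nsmul _ _ _ fun i _ => sum_card_image_noiseBlock_le hL hM hm hmL hmM n _ _
    _ = _ := smul_eq_mul _ _

variable {a b : ℤ} {v v' : ℤ × ℤ → Bool}

lemma votesIn_congr {r : ℤ × ℤ} (h : ∀ p, regionIdxT L M m a b p = r → v' p = v p)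
    (c : Bool) : votesIn L M m a b v' r c = votesIn L M m a b v r c := by
  unfold votesIn
  congr 1
  exact filter_congr fun p _ => and_congr_right fun hp => by rw [h p hp]

theorem card_regions_sub_card_touched_le_card_won (D : Finset (ℤ × ℤ))
    (hA : ∀ r ∈ (nation L M).image (regionIdxT L M m a b),
      votesIn L M m a b v r false < votesIn L M m a b v r true)
    (hD : ∀ p, v' p ≠ v p → p ∈ D) :
    #((nation L M).image (regionIdxT L M m a b)) - #(D.image (regionIdxT L M m a b)) ≤
      #(((nation L M).image (regionIdxT L M m a b)).filter
        fun r => votesIn L M m a b v' r false < votesIn L M m a b v' r true) := by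
  refine (le_card_sdiff _ _).trans (card_le_card fun r hr => ?_)
  obtain ⟨hr, hrD⟩ := mem_sdiff.1 hr
  have hsame : ∀ p, regionIdxT L M m a b p = r → v' p = v p := fun p hp =>
    by_contra fun hne => hrD (mem_image.2 ⟨p, hD p hne, hp⟩)
  rw [mem_filter, votesIn_congr hsame, votesIn_congr hsame]
  exact ⟨hr, hA r hr⟩

end regionIdxT

lemma two_mul_mul_sq_lt_of_noise_lt {L M mr mn : ℤ} {B : ℕ} (hmr : 1 ≤ mr) (hmn : 1 ≤ mn)
    (h : (((B * mn ^ 2 : ℤ)) : ℚ) < ((mn : ℚ) / ((mr : ℚ) + (mn : ℚ) - 1)) ^ 2 *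
      (((L : ℚ) * (M : ℚ)) / 2)) :
    2 * B * (mr + mn - 1) ^ 2 < L * M := by
  have hd : (0 : ℚ) < mr + mn - 1 := by
    have : (1 : ℚ) ≤ mr := by exact_mod_cast hmr
    have : (1 : ℚ) ≤ mn := by exact_mod_cast hmn
    linarith
  have hmn2 : (0 : ℚ) < mn ^ 2 := by positivity
  rw [div_pow, div_mul_eq_mul_div, lt_div_iff₀ (by positivity)] at h
  push_cast at h
  qify
  nlinarith

theorem shifted_regional_voting_retains_A_general (L M mr mn : ℤ)
    (hL : 0 < L) (hM : 0 < M) (hmr : 1 ≤ mr) (hmn : 1 ≤ mn)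
    (hdL : mr ∣ L) (hdM : mr ∣ M)
    (v v' : ℤ × ℤ → Bool)
    (hAwins : ∀ a b : ℤ, 0 ≤ a → a < mr → 0 ≤ b → b < mr →
      ∀ r ∈ (nation L M).image (regionIdxT L M mr a b),
        votesIn L M mr a b v r false < votesIn L M mr a b v r true)
    (Bblk : ℕ) (pos : Fin Bblk → ℤ × ℤ)
    (hdiff : ∀ p, v' p ≠ v p →
      p ∈ Finset.univ.biUnion (fun i : Fin Bblk => noiseBlock mn (pos i).1 (pos i).2))
    (Sc : ℤ) (hSc : Sc = (Bblk : ℤ) * mn ^ 2)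
    (hnoise : (Sc : ℚ) < ((mn : ℚ) / ((mr : ℚ) + (mn : ℚ) - 1)) ^ 2 *
      (((L : ℚ) * (M : ℚ)) / 2)) :
    ∃ a b : ℤ, 0 ≤ a ∧ a < mr ∧ 0 ≤ b ∧ b < mr ∧
      ((nation L M).image (regionIdxT L M mr a b)).card <
        2 * (((nation L M).image (regionIdxT L M mr a b)).filter
          (fun r => votesIn L M mr a b v' r false < votesIn L M mr a b v' r true)).card := by
  set D := univ.biUnion fun i : Fin Bblk => noiseBlock mn (pos i).1 (pos i).2
  have hm : 0 < mr := by omega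
  have htouched := sum_card_image_biUnion_noiseBlock_le hL hM hm hdL hdM mn univ pos
  rw [card_univ, Fintype.card_fin] at htouched
  obtain ⟨⟨a, b⟩, hab, hfew⟩ : ∃ s ∈ Ico 0 mr ×ˢ Ico 0 mr,
      2 * (#(D.image (regionIdxT L M mr s.1 s.2)) : ℤ) < L / mr * (M / mr) := by
    refine exists_lt_of_sum_lt ?_
    calc ∑ s ∈ Ico 0 mr ×ˢ Ico 0 mr, 2 * (#(D.image (regionIdxT L M mr s.1 s.2)) : ℤ)
        ≤ 2 * Bblk * (mr + mn - 1) ^ 2 := by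
          rw [← mul_sum, mul_assoc, ← Int.toNat_of_nonneg (show 0 ≤ mr + mn - 1 by omega)]
          exact_mod_cast Nat.mul_le_mul_left 2 htouched
      _ < L * M := two_mul_mul_sq_lt_of_noise_lt hmr hmn (hSc ▸ hnoise)
      _ = (L / mr * mr) * (M / mr * mr) := by
          rw [Int.ediv_mul_cancel hdL, Int.ediv_mul_cancel hdM]
      _ = ∑ s ∈ Ico 0 mr ×ˢ Ico 0 mr, L / mr * (M / mr) := by
          rw [sum_const, card_product, Int.card_Ico, sub_zero, nsmul_eq_mul, Nat.cast_mul,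
            Int.toNat_of_nonneg hm.le]
          ring
  simp only [mem_product, mem_Ico] at hab hfew
  obtain ⟨⟨ha0, ham⟩, hb0, hbm⟩ := hab
  refine ⟨a, b, ha0, ham, hb0, hbm, ?_⟩
  have hwon := card_regions_sub_card_touched_le_card_won D (hAwins a b ha0 ham hb0 hbm) hdiff
  have hregions := card_image_regionIdxT_nation hL hM hm hdL hdM a b
  omega

/-- Theorem 2, item 2: if A wins every region of every shifted partition under `v`, and all
cells where `v'` differs from `v` lie in a union of pairwise disjoint `m_n × m_n` blocks of
total size `S_c < (m_n/(m_r + m_n − 1))² · N/2`, then for some shift `(a,b)` the regional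
voting with the corresponding shifted partition still selects A under `v'`. -/
theorem shifted_regional_voting_retains_A (L M mr mn : ℤ)
    (hL : 0 < L) (hM : 0 < M) (hmr : 1 ≤ mr) (hmn : 1 ≤ mn)
    (hdL : mr ∣ L) (hdM : mr ∣ M)
    (hnL : mn ≤ L - mr) (hnM : mn ≤ M - mr)
    (v v' : ℤ × ℤ → Bool)
    (hAwins : ∀ a b : ℤ, 0 ≤ a → a < mr → 0 ≤ b → b < mr →
      ∀ r ∈ (nation L M).image (regionIdxT L M mr a b),
        votesIn L M mr a b v r false < votesIn L M mr a b v r true)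
    (Bblk : ℕ) (pos : Fin Bblk → ℤ × ℤ)
    (hdisj : ∀ i j : Fin Bblk, i ≠ j →
      Disjoint (noiseBlock mn (pos i).1 (pos i).2) (noiseBlock mn (pos j).1 (pos j).2))
    (hsub : ∀ i : Fin Bblk, noiseBlock mn (pos i).1 (pos i).2 ⊆ nation L M)
    (hdiff : ∀ p, v' p ≠ v p →
      p ∈ Finset.univ.biUnion (fun i : Fin Bblk => noiseBlock mn (pos i).1 (pos i).2))
    (Sc : ℤ) (hSc : Sc = (Bblk : ℤ) * mn ^ 2)
    (hnoise : (Sc : ℚ) < ((mn : ℚ) / ((mr : ℚ) + (mn : ℚ) - 1)) ^ 2 *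
      (((L : ℚ) * (M : ℚ)) / 2)) :
    ∃ a b : ℤ, 0 ≤ a ∧ a < mr ∧ 0 ≤ b ∧ b < mr ∧
      ((nation L M).image (regionIdxT L M mr a b)).card <
        2 * (((nation L M).image (regionIdxT L M mr a b)).filter
          (fun r => votesIn L M mr a b v' r false < votesIn L M mr a b v' r true)).card :=
  shifted_regional_voting_retains_A_general L M mr mn hL hM hmr hmn hdL hdM v v' hAwins Bblk pos
    hdiff Sc hSc hnoise
end

section
/- Let 1 ≤ m_n ≤ m_r and fix a block position (u,v) ∈ ℤ². Among the m_r² shifts (a,b) ∈ {0,…,m_r−1}², exactly (m_n − 1)² are such that the m_n × m_n noise-concentrated block at (u,v) attains exactly 4 distinct region indices under offset (a,b), exactly 2(m_n − 1)(m_r − m_n + 1) are such that it attains exactly 2 distinct region indices, and exactly (m_r − m_n + 1)² are such that it attains exactly 1 region index. -/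
/-!
The region index is computed coordinatewise, so the set of regions met by the block is the
product of the sets met by its two sides. A side `[c, c + m_n)` meets one region, or two exactly
when `(c - a) mod m_r > m_r - m_n`. As `a` runs over `{0, …, m_r - 1}`, so does the residue
`(c - a) mod m_r`, hence `m_n - 1` offsets cut a given side and `m_r - m_n + 1` do not. The block
meets 4, 2 or 1 regions according as both, exactly one, or neither of its sides is cut.
-/

open Finset

namespace Finset

variable {α β : Type*} {s : Finset α} {t : Finset β}

lemma card_filter_product_and (p : α → Prop) (q : β → Prop) [DecidablePred p]
    [DecidablePred q] :
    #{x ∈ s ×ˢ t | p x.1 ∧ q x.2} = #{a ∈ s | p a} * #{b ∈ t | q b} := by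
  rw [filter_product, card_product]

lemma card_filter_product_xor (p : α → Prop) (q : β → Prop) [DecidablePred p]
    [DecidablePred q] :
    #{x ∈ s ×ˢ t | Xor (p x.1) (q x.2)} =
      #{a ∈ s | p a} * #{b ∈ t | ¬q b} + #{a ∈ s | ¬p a} * #{b ∈ t | q b} := by
  classical
  have hdisj : Disjoint {x ∈ s ×ˢ t | p x.1 ∧ ¬q x.2} {x ∈ s ×ˢ t | ¬p x.1 ∧ q x.2} :=
    disjoint_filter.2 fun _ _ h h' => h'.1 h.1
  rw [← card_filter_product_and, ← card_filter_product_and, ← card_union_of_disjoint hdisj,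
    ← filter_or]
  exact congrArg card (filter_congr fun x _ => by rw [Xor]; tauto)

end Finset

namespace Int

lemma image_ediv_Ico {m n : ℤ} (hm : 0 < m) (hn : 0 < n) (c : ℤ) :
    (Ico c (c + n)).image (· / m) = Icc (c / m) ((c + n - 1) / m) := by
  ext d
  simp only [mem_image, mem_Ico, mem_Icc]
  constructor
  · rintro ⟨x, ⟨hcx, hxn⟩, rfl⟩
    exact ⟨Int.ediv_le_ediv hm hcx, Int.ediv_le_ediv hm (by omega)⟩
  · rintro ⟨hcd, hdn⟩
    -- the first point of the interval lying in block `d`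
    refine ⟨max c (d * m), ⟨le_max_left _ _, ?_⟩, ?_⟩
    · have := (Int.le_ediv_iff_mul_le hm).1 hdn
      omega
    · rw [Int.ediv_eq_iff_of_pos hm]
      have := (Int.ediv_lt_iff_lt_mul hm).1 (Int.lt_add_one_iff.2 hcd)
      rcases max_cases c (d * m) with ⟨h, _⟩ | ⟨h, _⟩ <;> rw [h] <;> constructor <;> linarith

lemma add_sub_one_ediv_of_le {m n : ℤ} (hn : 1 ≤ n) (hnm : n ≤ m) (c : ℤ) :
    (c + n - 1) / m = c / m + if m - n < c % m then 1 else 0 := by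
  have hm : 0 < m := by omega
  have := Int.emod_add_mul_ediv c m
  have := Int.emod_nonneg c hm.ne'
  have := Int.emod_lt_of_pos c hm
  rw [Int.ediv_eq_iff_of_pos hm]
  split_ifs <;> constructor <;> nlinarith

lemma card_filter_Ico_sub_emod {m : ℤ} (hm : 0 < m) (c : ℤ) (p : ℤ → Prop) [DecidablePred p] :
    #{a ∈ Ico 0 m | p ((c - a) % m)} = #{r ∈ Ico 0 m | p r} := by
  have hinv : ∀ a ∈ Ico 0 m, (c - (c - a) % m) % m = a := fun a ha => by
    rw [mem_Ico] at ha
    rw [Int.sub_emod, Int.emod_emod, ← Int.sub_emod, sub_sub_cancel, Int.emod_eq_of_lt ha.1 ha.2]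
  have hmaps : ∀ a, (c - a) % m ∈ Ico 0 m := fun a =>
    mem_Ico.2 ⟨Int.emod_nonneg _ hm.ne', Int.emod_lt_of_pos _ hm⟩
  refine card_nbij' (fun a => (c - a) % m) (fun r => (c - r) % m) ?_ ?_ ?_ ?_
  · intro a ha
    rw [mem_coe, mem_filter] at ha ⊢
    exact ⟨hmaps a, ha.2⟩
  · intro r hr
    rw [mem_coe, mem_filter] at hr ⊢
    exact ⟨hmaps r, by rw [hinv r hr.1]; exact hr.2⟩
  · exact fun a ha => hinv a (mem_filter.1 ha).1
  · exact fun r hr => hinv r (mem_filter.1 hr).1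

end Int

/-- For `n ≤ m`: the segment `[c, c + n)` meets two of the regions `[a + k m, a + (k + 1) m)`. -/
def CrossesBoundary (m n c a : ℤ) : Prop := m - n < (c - a) % m

instance (m n c a : ℤ) : Decidable (CrossesBoundary m n c a) :=
  inferInstanceAs (Decidable (_ < _))

section

variable {m n : ℤ}

lemma card_image_fdiv_Ico (hn : 1 ≤ n) (hnm : n ≤ m) (a c : ℤ) :
    #((Ico c (c + n)).image fun x => (x - a).fdiv m) =
      if CrossesBoundary m n c a then 2 else 1 := by
  have hm : 0 < m := by omega
  have hshift : (fun x => (x - a).fdiv m) = (· / m) ∘ (· + -a) := by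
    funext x
    simp [Int.fdiv_eq_ediv_of_nonneg _ hm.le, sub_eq_add_neg]
  rw [hshift, ← image_image, image_add_right_Ico, add_right_comm,
    Int.image_ediv_Ico hm (by omega), Int.card_Icc, Int.add_sub_one_ediv_of_le hn hnm,
    ← sub_eq_add_neg]
  by_cases h : m - n < (c - a) % m
  · simp [CrossesBoundary, h]
    omega
  · simp [CrossesBoundary, h]

lemma card_filter_crossesBoundary (hn : 1 ≤ n) (hnm : n ≤ m) (c : ℤ) :
    (#{a ∈ Ico 0 m | CrossesBoundary m n c a} : ℤ) = n - 1 := by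
  have hm : 0 < m := by omega
  have hfilter : {r ∈ Ico 0 m | m - n < r} = Ico (m - n + 1) m := by
    ext r
    simp only [mem_filter, mem_Ico]
    omega
  rw [show #{a ∈ Ico 0 m | CrossesBoundary m n c a} = #{r ∈ Ico 0 m | m - n < r} from
    Int.card_filter_Ico_sub_emod hm c (m - n < ·), hfilter, Int.card_Ico]
  omega

lemma card_filter_not_crossesBoundary (hn : 1 ≤ n) (hnm : n ≤ m) (c : ℤ) :
    (#{a ∈ Ico 0 m | ¬CrossesBoundary m n c a} : ℤ) = m - n + 1 := by
  have hm : 0 < m := by omega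
  have hfilter : {r ∈ Ico 0 m | ¬m - n < r} = Ico 0 (m - n + 1) := by
    ext r
    simp only [mem_filter, mem_Ico]
    omega
  rw [show #{a ∈ Ico 0 m | ¬CrossesBoundary m n c a} = #{r ∈ Ico 0 m | ¬m - n < r} from
    Int.card_filter_Ico_sub_emod hm c (¬m - n < ·), hfilter, Int.card_Ico]
  omega

lemma image_regionIdx_noiseBlock (a b u v : ℤ) :
    (noiseBlock n u v).image (regionIdx m a b) =
      (Ico u (u + n)).image (fun x => (x - a).fdiv m) ×ˢ
        (Ico v (v + n)).image (fun y => (y - b).fdiv m) :=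
  prodMap_image_product (fun x => (x - a).fdiv m) (fun y => (y - b).fdiv m) _ _

lemma card_image_regionIdx_noiseBlock (hn : 1 ≤ n) (hnm : n ≤ m) (a b u v : ℤ) :
    #((noiseBlock n u v).image (regionIdx m a b)) =
      (if CrossesBoundary m n u a then 2 else 1) * (if CrossesBoundary m n v b then 2 else 1) := by
  rw [image_regionIdx_noiseBlock, card_product, card_image_fdiv_Ico hn hnm,
    card_image_fdiv_Ico hn hnm]

lemma card_image_regionIdx_noiseBlock_eq_four_iff (hn : 1 ≤ n) (hnm : n ≤ m) (a b u v : ℤ) :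
    #((noiseBlock n u v).image (regionIdx m a b)) = 4 ↔
      CrossesBoundary m n u a ∧ CrossesBoundary m n v b := by
  rw [card_image_regionIdx_noiseBlock hn hnm]
  split_ifs <;> simp [*]

lemma card_image_regionIdx_noiseBlock_eq_two_iff (hn : 1 ≤ n) (hnm : n ≤ m) (a b u v : ℤ) :
    #((noiseBlock n u v).image (regionIdx m a b)) = 2 ↔
      Xor (CrossesBoundary m n u a) (CrossesBoundary m n v b) := by
  rw [card_image_regionIdx_noiseBlock hn hnm]
  split_ifs <;> simp [Xor, *]

lemma card_image_regionIdx_noiseBlock_eq_one_iff (hn : 1 ≤ n) (hnm : n ≤ m) (a b u v : ℤ) :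
    #((noiseBlock n u v).image (regionIdx m a b)) = 1 ↔
      ¬CrossesBoundary m n u a ∧ ¬CrossesBoundary m n v b := by
  rw [card_image_regionIdx_noiseBlock hn hnm]
  split_ifs <;> simp [*]

end

/-- Case counting in the proof of Theorem 2 for `m_n ≤ m_r`: among the `m_r²` shifts
`(a,b) ∈ {0,…,m_r−1}²`, exactly `(m_n−1)²` cut the `m_n × m_n` block into 4 regions,
exactly `2(m_n−1)(m_r−m_n+1)` cut it into 2 regions, and exactly `(m_r−m_n+1)²` leave it
inside a single region. -/
theorem shift_case_counting (mr mn : ℤ) (hmn : 1 ≤ mn) (hle : mn ≤ mr) (u v : ℤ) :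
    ((((Finset.Ico (0 : ℤ) mr ×ˢ Finset.Ico (0 : ℤ) mr).filter
        (fun ab => ((noiseBlock mn u v).image (regionIdx mr ab.1 ab.2)).card = 4)).card : ℤ)
      = (mn - 1) ^ 2) ∧
    ((((Finset.Ico (0 : ℤ) mr ×ˢ Finset.Ico (0 : ℤ) mr).filter
        (fun ab => ((noiseBlock mn u v).image (regionIdx mr ab.1 ab.2)).card = 2)).card : ℤ)
      = 2 * (mn - 1) * (mr - mn + 1)) ∧
    ((((Finset.Ico (0 : ℤ) mr ×ˢ Finset.Ico (0 : ℤ) mr).filter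
        (fun ab => ((noiseBlock mn u v).image (regionIdx mr ab.1 ab.2)).card = 1)).card : ℤ)
      = (mr - mn + 1) ^ 2) := by
  simp only [card_image_regionIdx_noiseBlock_eq_four_iff hmn hle,
    card_image_regionIdx_noiseBlock_eq_two_iff hmn hle,
    card_image_regionIdx_noiseBlock_eq_one_iff hmn hle]
  rw [card_filter_product_and, card_filter_product_xor,
    card_filter_product_and (fun a => ¬CrossesBoundary mr mn u a) (¬CrossesBoundary mr mn v ·)]
  push_cast
  simp only [card_filter_crossesBoundary hmn hle, card_filter_not_crossesBoundary hmn hle]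
  exact ⟨by ring, by ring, by ring⟩
end

section
/- For all integers m ≥ 1, n ≥ 1 and any s ∈ ℤ, the sum over a from 0 to m − 1 of the number of distinct values of ⌊(x − a)/m⌋, as x ranges over the n consecutive integers s, s+1, …, s+n−1, equals n + m − 1. -/
/-!
For a fixed shift `a`, the quotients `⌊(x - a)/m⌋` of `n` consecutive integers fill the whole
integer interval from `⌊(s - a)/m⌋` to `⌊(s + n - 1 - a)/m⌋`, so they take
`⌊(s + n - 1 - a)/m⌋ - ⌊(s - a)/m⌋ + 1` values. Summed over `a`, Hermite's identity
`∑_{a<m} ⌊(t - a)/m⌋ = t - m + 1` evaluates both floor sums.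
-/

open Finset

theorem Int.image_ediv_Ico_s16 {m p q : ℤ} (hm : 0 < m) (hpq : p < q) :
    (Ico p q).image (· / m) = Icc (p / m) ((q - 1) / m) := by
  ext k
  simp only [mem_image, mem_Icc, mem_Ico]
  constructor
  · rintro ⟨x, ⟨hpx, hxq⟩, rfl⟩
    exact ⟨Int.ediv_le_ediv hm hpx, Int.ediv_le_ediv hm (by omega)⟩
  · rintro ⟨hpk, hkq⟩
    have hkm : k * m ≤ q - 1 := (Int.le_ediv_iff_mul_le hm).mp hkq
    refine ⟨max p (k * m), ⟨le_max_left _ _, by omega⟩, le_antisymm ?_ ?_⟩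
    · rcases max_cases p (k * m) with ⟨h, -⟩ | ⟨h, -⟩
      · rwa [h]
      · rw [h, Int.mul_ediv_cancel _ hm.ne']
    · exact (Int.le_ediv_iff_mul_le hm).mpr (le_max_right _ _)

theorem Int.card_image_ediv_Ico {m p q : ℤ} (hm : 0 < m) (hpq : p < q) :
    (#((Ico p q).image (· / m)) : ℤ) = (q - 1) / m + 1 - p / m := by
  have hle : p / m ≤ (q - 1) / m := Int.ediv_le_ediv hm (by omega)
  rw [Int.image_ediv_Ico_s16 hm hpq, Int.card_Icc, Int.toNat_of_nonneg (by omega)]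

theorem Int.sum_Ico_zero_eq_sum_range {M : Type*} [AddCommMonoid M] (f : ℤ → M) (m : ℤ) :
    ∑ a ∈ Ico 0 m, f a = ∑ i ∈ Finset.range m.toNat, f i := by
  simp [Int.Ico_eq_finset_map]

/-- Hermite's identity `∑_{i<k} ⌊(t + i)/k⌋ = t`, with `i` replaced by `k - 1 - i`. -/
theorem Int.sum_range_sub_ediv {k : ℕ} (hk : 0 < k) (t : ℤ) :
    ∑ i ∈ Finset.range k, (t - i) / k = t - k + 1 := by
  have hsucc : ∀ t : ℤ,
      ∑ i ∈ Finset.range k, (t + 1 - i) / k = ∑ i ∈ Finset.range k, (t - i) / k + 1 := by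
    intro t
    -- raising `t` by one shifts the summands by one index: the sum gains `(t + 1)/k` and
    -- loses `(t + 1 - k)/k = (t + 1)/k - 1`
    have h := (sum_range_succ (fun i : ℕ => (t + 1 - i) / k) k).symm.trans
      (sum_range_succ' (fun i : ℕ => (t + 1 - i) / k) k)
    have hshift : (t + 1 - k) / k = (t + 1) / k - 1 := by
      rw [Int.sub_ediv_of_dvd _ dvd_rfl, Int.ediv_self (by omega)]
    simp only [Nat.cast_add, Nat.cast_one, Nat.cast_zero, sub_zero,
      show ∀ i : ℤ, t + 1 - (i + 1) = t - i from fun i => by ring] at h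
    omega
  induction t using Int.inductionOn' (b := k - 1) with
  | zero =>
    rw [sum_eq_zero fun i hi => Int.ediv_eq_zero_of_lt (by simp at hi; omega) (by omega)]
    ring
  | succ t _ ih => rw [hsucc, ih]; ring
  | pred t _ ih => rw [← sub_add_cancel t 1, hsucc] at ih; linarith

/-- One-dimensional shifting lemma underlying the counting claim of Theorem 2: summed over
all `m` shifts `a ∈ {0,…,m−1}` of the partition of `ℤ` into length-`m` intervals, the
interval of `n` consecutive cells `s, s+1, …, s+n−1` meets a total of `n + m − 1` intervals. -/
theorem sum_over_shifts_interval_regions (m n : ℤ) (hm : 1 ≤ m) (hn : 1 ≤ n) (s : ℤ) :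
    (∑ a ∈ Finset.Ico (0 : ℤ) m,
      (((Finset.Ico s (s + n)).image (fun x => (x - a).fdiv m)).card : ℤ))
      = n + m - 1 := by
  have hcard (a : ℤ) : (#((Ico s (s + n)).image (fun x => (x - a).fdiv m)) : ℤ)
      = (s + n - 1 - a) / m + 1 - (s - a) / m := by
    have himage : (Ico s (s + n)).image (fun x => (x - a).fdiv m)
        = (Ico (s - a) (s + n - a)).image (· / m) := by
      simp_rw [sub_eq_add_neg _ a, ← image_add_right_Ico, image_image]
      exact image_congr fun x _ => Int.fdiv_eq_ediv_of_nonneg _ (by omega)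
    rw [himage, Int.card_image_ediv_Ico (by omega) (by omega), sub_right_comm (s + n) a]
  lift m to ℕ using (by omega)
  simp only [hcard, Int.sum_Ico_zero_eq_sum_range, Int.toNat_natCast, sum_add_distrib,
    sum_sub_distrib, Int.sum_range_sub_ediv (by omega : 0 < m), sum_const, Int.card_Ico, sub_zero,
    nsmul_one]
  ring
end
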